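/- There exists a Gδ set C ⊆ ℝ × ℝ such that, letting π : ℝ × ℝ → ℝ be the indicator function of C (a bounded Borel function of Baire class two), the best response relation E^π = {(s,μ) ∈ ℝ × Δ(ℝ) : ∫ π(s,y) dμ(y) ≥ ∫ π(t,y) dμ(y) for all t ∈ ℝ} is not a Borel subset of ℝ × Δ(ℝ). -/

import Mathlib

/-!
The set `C` is the image in `[0,1]²` of a Gδ set `W` of pairs in Cantor space whose projection
`Prod.snd '' W` is not Borel. The strategy `-1` earns nothing against any state, so `(-1, δ_y)`
is a best response exactly when `y` lies outside the projection of `C`; if `E^π` were Borel,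
pulling it back along the continuous map `y ↦ (-1, δ_y)` would make that projection Borel.

`W` collects the witnesses of a universal analytic set: Baire space sits in Cantor space as the
Gδ set `baireCodes`, every Borel subset of Cantor space is a section of `universal`, and Cantor's
diagonal argument shows that the diagonal of `universal`, which is the projection of `W`,
is not Borel.
-/

open MeasureTheory Set Filter Topology

section BestResponse

variable {X Y : Type*} [MeasurableSpace Y]

def bestResponse (C : Set (X × Y)) : Set (X × ProbabilityMeasure Y) :=
  {p | ∀ t : X,
    ∫ y, C.indicator (fun _ => (1 : ℝ)) (p.1, y) ∂(p.2 : Measure Y) ≥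
    ∫ y, C.indicator (fun _ => (1 : ℝ)) (t, y) ∂(p.2 : Measure Y)}

theorem mem_bestResponse_diracProba_iff [MeasurableSingletonClass Y] {C : Set (X × Y)} {s : X}
    (hs : ∀ y, (s, y) ∉ C) (y : Y) :
    (s, diracProba y) ∈ bestResponse C ↔ y ∉ Prod.snd '' C := by
  simp only [bestResponse, mem_ofPred_eq, diracProba, ProbabilityMeasure.coe_mk, integral_dirac,
    indicator_of_notMem (hs y), mem_image, Prod.exists, exists_eq_right, not_exists]
  refine forall_congr' fun t => ?_
  by_cases ht : (t, y) ∈ C <;> simp [ht]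

theorem measurableSet_image_snd_of_measurableSet_bestResponse [TopologicalSpace X]
    [TopologicalSpace Y] [BorelSpace Y] [T1Space Y] {C : Set (X × Y)} {s : X}
    (hs : ∀ y, (s, y) ∉ C) (hC : MeasurableSet[borel (X × ProbabilityMeasure Y)] (bestResponse C)) :
    MeasurableSet (Prod.snd '' C) := by
  let := borel (X × ProbabilityMeasure Y)
  have : BorelSpace (X × ProbabilityMeasure Y) := ⟨rfl⟩
  have hdirac : Measurable fun y : Y => (s, diracProba y) :=
    (continuous_const.prodMk continuous_diracProba).measurable
  have : (fun y : Y => (s, diracProba y)) ⁻¹' bestResponse C = (Prod.snd '' C)ᶜ := by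
    ext y
    exact mem_bestResponse_diracProba_iff hs y
  simpa [this] using hdirac hC

end BestResponse

theorem Topology.IsInducing.isGδ_image {X Y : Type*} [TopologicalSpace X] [TopologicalSpace Y]
    {f : X → Y} (hf : IsInducing f) (hrange : IsGδ (range f)) {s : Set X} (hs : IsGδ s) :
    IsGδ (f '' s) := by
  obtain ⟨T, hTopen, hTcount, rfl⟩ := hs
  choose! g hgopen hg using fun t (ht : t ∈ T) => hf.isOpen_iff.1 (hTopen t ht)
  have : f '' ⋂₀ T = (⋂ t ∈ T, g t) ∩ range f := by
    ext y
    constructor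
    · rintro ⟨x, hx, rfl⟩
      refine ⟨mem_iInter₂.2 fun t ht => ?_, mem_range_self x⟩
      have hxt := hx t ht
      rwa [← hg t ht] at hxt
    · rintro ⟨hy, x, rfl⟩
      exact ⟨x, fun t ht => hg t ht ▸ mem_iInter₂.1 hy t ht, rfl⟩
  rw [this]
  exact (IsGδ.biInter hTcount fun t ht => (hgopen t ht).isGδ).inter hrange

theorem not_measurableSet_diag_of_forall_exists_section {X : Type*} [MeasurableSpace X]
    {U : Set (X × X)} (hU : ∀ D : Set X, MeasurableSet D → ∃ a, {x | (a, x) ∈ U} = D) :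
    ¬ MeasurableSet {x | (x, x) ∈ U} := by
  intro h
  obtain ⟨a, ha⟩ := hU _ h.compl
  exact iff_not_self (Set.ext_iff.1 ha a)

theorem Continuous.apply_of_discreteTopology {X ι Y : Type*} [TopologicalSpace X]
    [TopologicalSpace ι] [DiscreteTopology ι] [TopologicalSpace Y] {f : X → ι → Y} {i : X → ι}
    (hf : Continuous f) (hi : Continuous i) : Continuous fun x => f x (i x) := by
  refine continuous_iff_continuousAt.2 fun x => ?_
  have hix : ∀ᶠ y in 𝓝 x, i y = i x := by
    simpa [nhds_discrete] using hi.tendsto x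
  exact ((continuous_apply (i x)).comp hf).continuousAt.congr
    (hix.mono fun y hy => by simp [hy])

theorem isOpen_setOf_apply_eq {ι α : Type*} [TopologicalSpace α] [DiscreteTopology α] (i : ι)
    (v : α) : IsOpen {b : ι → α | b i = v} :=
  (isOpen_discrete {v}).preimage (continuous_apply i : Continuous fun b : ι → α => b i)

theorem tendsto_pi_nhds_of_forall_lt_eq {α : Type*} [TopologicalSpace α] {u : ℕ → ℕ → α}
    {a : ℕ → α} (h : ∀ n, ∀ k < n, u n k = a k) : Tendsto u atTop (𝓝 a) :=
  tendsto_pi_nhds.2 fun k => tendsto_const_nhds.congr' <|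
    (eventually_gt_atTop k).mono fun n hn => (h n k hn).symm

namespace CantorSpace

def baireCodes : Set (ℕ → Bool) := {b | ∀ n, ∃ m, b (Nat.pair n m) = true}

open Classical in
noncomputable def baireDecode (b : ℕ → Bool) (n : ℕ) : ℕ :=
  if h : ∃ m, b (Nat.pair n m) = true then Nat.find h else 0

def baireEncode (β : ℕ → ℕ) (i : ℕ) : Bool := (Nat.unpair i).2 = β (Nat.unpair i).1

theorem isGδ_baireCodes : IsGδ baireCodes := by
  have : baireCodes = ⋂ n, ⋃ m, {b : ℕ → Bool | b (Nat.pair n m) = true} := by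
    ext b
    simp [baireCodes]
  rw [this]
  exact .iInter fun n => (isOpen_iUnion fun m => isOpen_setOf_apply_eq _ _).isGδ

theorem baireDecode_apply_eq {b : ℕ → Bool} {n m : ℕ} (hm : b (Nat.pair n m) = true)
    (hlt : ∀ k < m, b (Nat.pair n k) = false) : baireDecode b n = m := by
  classical
  rw [baireDecode, dif_pos ⟨m, hm⟩, Nat.find_eq_iff]
  exact ⟨hm, fun k hk => by simp [hlt k hk]⟩

theorem baireDecode_spec {b : ℕ → Bool} (hb : b ∈ baireCodes) (n : ℕ) :
    b (Nat.pair n (baireDecode b n)) = true ∧ ∀ k < baireDecode b n, b (Nat.pair n k) = false := by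
  classical
  rw [baireDecode, dif_pos (hb n)]
  exact ⟨Nat.find_spec (hb n), fun k hk => by simpa using Nat.find_min (hb n) hk⟩

theorem baireEncode_mem_baireCodes (β : ℕ → ℕ) : baireEncode β ∈ baireCodes :=
  fun n => ⟨β n, by simp [baireEncode]⟩

theorem baireDecode_baireEncode (β : ℕ → ℕ) : baireDecode (baireEncode β) = β :=
  funext fun n => baireDecode_apply_eq (by simp [baireEncode])
    fun k hk => by simp [baireEncode, hk.ne]

theorem continuousAt_baireDecode {b : ℕ → Bool} (hb : b ∈ baireCodes) :
    ContinuousAt baireDecode b := by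
  refine continuousAt_pi.2 fun n => ?_
  have hcoord : ∀ i, ∀ᶠ c in 𝓝 b, c i = b i := fun i => by
    simpa [nhds_discrete] using (continuous_apply i).tendsto b
  obtain ⟨hm, hlt⟩ := baireDecode_spec hb n
  have hagree : ∀ᶠ c in 𝓝 b, ∀ k ∈ Iic (baireDecode b n), c (Nat.pair n k) = b (Nat.pair n k) :=
    (finite_Iic _).eventually_all.2 fun k _ => hcoord _
  refine (continuousAt_const (y := baireDecode b n)).congr (hagree.mono fun c hc => ?_)
  have hcm : c (Nat.pair n (baireDecode b n)) = true := by rw [hc _ (mem_Iic.2 le_rfl), hm]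
  exact (baireDecode_apply_eq hcm fun k hk => by rw [hc k hk.le, hlt k hk]).symm

def prefixCode (n : ℕ) (a b : ℕ → Bool) : ℕ :=
  Encodable.encode (List.ofFn fun k : Fin n => (a k, b k))

theorem agree_of_prefixCode_eq {n n' : ℕ} {a a' b b' : ℕ → Bool}
    (h : prefixCode n a b = prefixCode n' a' b') :
    n = n' ∧ ∀ k < n, a k = a' k ∧ b k = b' k := by
  have hlist := Encodable.encode_injective h
  obtain rfl : n = n' := by simpa using congrArg List.length hlist
  refine ⟨rfl, fun k hk => ?_⟩
  simpa using congrFun (List.ofFn_injective hlist) ⟨k, hk⟩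

theorem continuous_prefixCode (n : ℕ) :
    Continuous fun q : (ℕ → Bool) × (ℕ → Bool) => prefixCode n q.1 q.2 :=
  (continuous_of_discreteTopology (f := fun p : Fin n → Bool × Bool =>
    Encodable.encode (List.ofFn p))).comp <| continuous_pi fun k =>
      ((continuous_apply (k : ℕ)).comp continuous_fst).prodMk
        ((continuous_apply (k : ℕ)).comp continuous_snd)

def universal : Set ((ℕ → Bool) × (ℕ → Bool)) :=
  {p | ∃ b ∈ baireCodes, ∀ n, p.1 (prefixCode n p.2 b) = true}

theorem exists_section_universal_eq_image {f : (ℕ → Bool) → ℕ → Bool}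
    (hf : ∀ b ∈ baireCodes, ContinuousAt f b) :
    ∃ A, {a | (A, a) ∈ universal} = f '' baireCodes := by
  classical
  refine ⟨fun i => decide (∃ b ∈ baireCodes, ∃ n, i = prefixCode n (f b) b), ?_⟩
  ext a
  simp only [universal, mem_ofPred_eq, decide_eq_true_eq]
  constructor
  · rintro ⟨b, hb, hcode⟩
    choose c hc m hm using hcode
    have hagree := fun n => agree_of_prefixCode_eq (hm n)
    have hcb : Tendsto c atTop (𝓝 b) := tendsto_pi_nhds_of_forall_lt_eq fun n k hk =>
      ((hagree n).2 k hk).2.symm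
    have hfca : Tendsto (f ∘ c) atTop (𝓝 a) := tendsto_pi_nhds_of_forall_lt_eq fun n k hk =>
      ((hagree n).2 k hk).1.symm
    exact ⟨b, hb, tendsto_nhds_unique ((hf b hb).tendsto.comp hcb) hfca⟩
  · rintro ⟨b, hb, rfl⟩
    exact ⟨b, hb, fun n => ⟨b, hb, n, rfl⟩⟩

theorem exists_section_universal_eq {D : Set (ℕ → Bool)} (hD : MeasurableSet D) :
    ∃ A, {a | (A, a) ∈ universal} = D := by
  have : PolishSpace (ℕ → Bool) := {}
  have hDa := hD.analyticSet
  rw [AnalyticSet] at hDa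
  obtain rfl | ⟨g, hg, rfl⟩ := hDa
  · refine ⟨fun _ => false, eq_empty_of_forall_notMem fun a ⟨_, _, h⟩ => ?_⟩
    simp at h
  · obtain ⟨A, hA⟩ := exists_section_universal_eq_image (f := g ∘ baireDecode)
      fun b hb => hg.continuousAt.comp (continuousAt_baireDecode hb)
    refine ⟨A, hA.trans (Subset.antisymm (image_subset_iff.2 fun b _ => mem_range_self _) ?_)⟩
    rintro _ ⟨β, rfl⟩
    exact ⟨baireEncode β, baireEncode_mem_baireCodes β, by simp [baireDecode_baireEncode]⟩

theorem not_measurableSet_diag_universal : ¬ MeasurableSet {a | (a, a) ∈ universal} :=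
  not_measurableSet_diag_of_forall_exists_section fun _ => exists_section_universal_eq

def universalWitness : Set ((ℕ → Bool) × (ℕ → Bool)) :=
  {q | q.1 ∈ baireCodes ∧ ∀ n, q.2 (prefixCode n q.2 q.1) = true}

theorem image_snd_universalWitness :
    Prod.snd '' universalWitness = {a | (a, a) ∈ universal} := by
  ext a
  simp [universalWitness, universal]

theorem isGδ_universalWitness : IsGδ universalWitness := by
  have : universalWitness = Prod.fst ⁻¹' baireCodes ∩
      ⋂ n, (fun q : (ℕ → Bool) × (ℕ → Bool) => q.2 (prefixCode n q.2 q.1)) ⁻¹' {true} := by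
    ext q
    simp [universalWitness]
  rw [this]
  refine (isGδ_baireCodes.preimage continuous_fst).inter (.iInter fun n => IsOpen.isGδ ?_)
  exact (isOpen_discrete _).preimage (continuous_snd.apply_of_discreteTopology
    ((continuous_prefixCode n).comp continuous_swap))

theorem exists_isGδ_not_measurableSet_image_snd :
    ∃ W : Set ((ℕ → Bool) × (ℕ → Bool)), IsGδ W ∧ ¬ MeasurableSet (Prod.snd '' W) :=
  ⟨universalWitness, isGδ_universalWitness,
    image_snd_universalWitness ▸ not_measurableSet_diag_universal⟩

end CantorSpace

noncomputable def cantorSpaceToReal (a : ℕ → Bool) : ℝ := cantorSetHomeomorphNatToBool.symm a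

theorem isClosedEmbedding_cantorSpaceToReal : IsClosedEmbedding cantorSpaceToReal :=
  isClosed_cantorSet.isClosedEmbedding_subtypeVal.comp
    cantorSetHomeomorphNatToBool.symm.isClosedEmbedding

theorem cantorSpaceToReal_nonneg (a : ℕ → Bool) : 0 ≤ cantorSpaceToReal a :=
  (cantorSet_subset_unitInterval (cantorSetHomeomorphNatToBool.symm a).2).1

/-- There is a Gδ set `C ⊆ ℝ × ℝ` such that, for the payoff function
`π = 𝟙_C` (the indicator of `C`, a bounded Borel function of Baire class two), the best
response relation `E^π = {(s, μ) ∈ ℝ × Δ(ℝ) : ∫ π(s,y) dμ ≥ ∫ π(t,y) dμ for all t ∈ ℝ}` is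
not a Borel subset of `ℝ × Δ(ℝ)` (for the Borel σ-algebra of the product of the topology of
`ℝ` with the topology of weak convergence on `Δ(ℝ)`). -/
theorem stmt_14 :
    ∃ C : Set (ℝ × ℝ), IsGδ C ∧
      ¬ MeasurableSet[borel (ℝ × ProbabilityMeasure ℝ)]
        {p : ℝ × ProbabilityMeasure ℝ | ∀ t : ℝ,
          ∫ y, Set.indicator C (fun _ => (1 : ℝ)) (p.1, y) ∂(p.2 : Measure ℝ) ≥
          ∫ y, Set.indicator C (fun _ => (1 : ℝ)) (t, y) ∂(p.2 : Measure ℝ)} := by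
  obtain ⟨W, hW, hWm⟩ := CantorSpace.exists_isGδ_not_measurableSet_image_snd
  set e := cantorSpaceToReal
  have he : IsClosedEmbedding (Prod.map e e) :=
    isClosedEmbedding_cantorSpaceToReal.prodMap isClosedEmbedding_cantorSpaceToReal
  refine ⟨Prod.map e e '' W, he.isInducing.isGδ_image he.isClosed_range.isGδ hW, fun hE => hWm ?_⟩
  have hleft : ∀ y, ((-1 : ℝ), y) ∉ Prod.map e e '' W := by
    rintro y ⟨q, -, hq⟩
    have hq1 : e q.1 = -1 := congrArg Prod.fst hq
    linarith [cantorSpaceToReal_nonneg q.1]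
  have hsnd : Prod.snd '' W = e ⁻¹' (Prod.snd '' (Prod.map e e '' W)) := by
    rw [image_image, show (fun q => (Prod.map e e q).2) = e ∘ Prod.snd from rfl, image_comp,
      isClosedEmbedding_cantorSpaceToReal.injective.preimage_image]
  rw [hsnd]
  exact isClosedEmbedding_cantorSpaceToReal.continuous.measurable
    (measurableSet_image_snd_of_measurableSet_bestResponse hleft hE)
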